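/- For integers 2 ≤ a ≤ b, (b!/(a-1)!)^{1/(b-a+1)} > b·e^{−27/26}, and in particular (b!/(a-1)!)^{1/(b-a+1)} > b/3. -/

import Mathlib

/-!
The sequence `k! eᵏ / kᵏ` is nondecreasing, its successive ratios being `e / (1 + 1/k)ᵏ ≥ 1`.
Comparing its values at `m = a - 1` and `b`, and using `mᵐ ≤ bᵐ`, gives
`b! / m! ≥ bᵇ e^{m-b} / mᵐ ≥ (b / e)^{b-m}`, so the geometric mean of `a, …, b` is at least `b / e`.
Finally `e^{27/26} < 3`, since `e²⁷ < 3²⁶`.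
-/

open Real Nat

lemma natCast_pow_self_pos (k : ℕ) : (0 : ℝ) < (k : ℝ) ^ k := by
  exact_mod_cast Nat.pow_self_pos

lemma add_one_pow_le_exp_one_mul_pow (k : ℕ) : ((k : ℝ) + 1) ^ k ≤ exp 1 * (k : ℝ) ^ k := by
  rcases k.eq_zero_or_pos with rfl | hk
  · simp
  have hk' : (k : ℝ) ≠ 0 := by positivity
  calc ((k : ℝ) + 1) ^ k = (1 + (k : ℝ)⁻¹) ^ k * (k : ℝ) ^ k := by
        rw [← mul_pow, add_mul, inv_mul_cancel₀ hk', one_mul, add_comm]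
    _ ≤ exp 1 * (k : ℝ) ^ k := by gcongr; exact one_add_inv_pow_le_exp

lemma monotone_factorial_mul_exp_div_pow_self :
    Monotone fun k : ℕ => (k ! : ℝ) * exp k / (k : ℝ) ^ k := by
  refine monotone_nat_of_le_succ fun k => ?_
  have hk := natCast_pow_self_pos k
  have hk1 := natCast_pow_self_pos (k + 1)
  rw [div_le_div_iff₀ hk hk1]
  push_cast
  rw [Nat.factorial_succ, Nat.cast_mul, exp_add, pow_succ]
  push_cast
  calc (k ! : ℝ) * exp k * (((k : ℝ) + 1) ^ k * ((k : ℝ) + 1))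
      = ((k : ℝ) + 1) * k ! * exp k * ((k : ℝ) + 1) ^ k := by ring
    _ ≤ ((k : ℝ) + 1) * k ! * exp k * (exp 1 * (k : ℝ) ^ k) := by
      gcongr; exact add_one_pow_le_exp_one_mul_pow k
    _ = ((k : ℝ) + 1) * k ! * (exp k * exp 1) * (k : ℝ) ^ k := by ring

lemma pow_mul_exp_neg_one_le_factorial_div_factorial {m b : ℕ} (hmb : m ≤ b) :
    ((b : ℝ) * exp (-1)) ^ (b - m) ≤ (b ! : ℝ) / m ! := by
  obtain ⟨n, rfl⟩ := Nat.exists_eq_add_of_le hmb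
  have hmono := monotone_factorial_mul_exp_div_pow_self hmb
  simp only at hmono
  rw [div_le_div_iff₀ (natCast_pow_self_pos m) (natCast_pow_self_pos _)] at hmono
  have hpow : (m : ℝ) ^ m ≤ ((m + n : ℕ) : ℝ) ^ m := by gcongr
  have hbm : 0 < ((m + n : ℕ) : ℝ) ^ m := (natCast_pow_self_pos m).trans_le hpow
  have key : (((m + n : ℕ) : ℝ) ^ m * exp m) * (((m + n : ℕ) : ℝ) ^ n * m !) ≤
      (((m + n : ℕ) : ℝ) ^ m * exp m) * ((m + n)! * exp n) := by
    calc _ = (m ! : ℝ) * exp m * ((m + n : ℕ) : ℝ) ^ (m + n) := by ring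
      _ ≤ ((m + n)! : ℝ) * exp ((m + n : ℕ) : ℝ) * (m : ℝ) ^ m := hmono
      _ ≤ ((m + n)! : ℝ) * exp ((m + n : ℕ) : ℝ) * ((m + n : ℕ) : ℝ) ^ m := by gcongr
      _ = _ := by rw [Nat.cast_add, exp_add]; ring
  rw [Nat.add_sub_cancel_left, le_div_iff₀ (by positivity), mul_pow, ← exp_nat_mul, mul_neg_one,
    exp_neg, ← div_eq_mul_inv, div_mul_eq_mul_div, div_le_iff₀ (exp_pos _)]
  exact le_of_mul_le_mul_left key (by positivity)

lemma exp_27_div_26_lt_three : exp (27 / 26) < 3 := by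
  have h : exp (27 / 26) ^ 26 = exp 1 ^ 27 := by
    rw [← exp_nat_mul, ← exp_nat_mul]; norm_num
  refine lt_of_pow_lt_pow_left₀ 26 (by norm_num) ?_
  calc exp (27 / 26) ^ 26 = exp 1 ^ 27 := h
    _ < 2.7182818286 ^ 27 := by gcongr; exact exp_one_lt_d9
    _ < 3 ^ 26 := by norm_num

lemma mul_exp_neg_one_le_rpow_factorial_div_factorial {m b : ℕ} (hmb : m < b) :
    (b : ℝ) * exp (-1) ≤ ((b ! : ℝ) / m !) ^ (1 / ((b - m : ℕ) : ℝ)) := by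
  have hn : (0 : ℝ) < ((b - m : ℕ) : ℝ) := Nat.cast_pos.2 (Nat.sub_pos_of_lt hmb)
  rw [one_div, le_rpow_inv_iff_of_pos (by positivity) (by positivity) hn, rpow_natCast]
  exact pow_mul_exp_neg_one_le_factorial_div_factorial hmb.le

theorem stmt_1 (a b : ℕ) (ha : 2 ≤ a) (hab : a ≤ b) :
    ((b.factorial : ℝ) / ((a - 1).factorial : ℝ)) ^ (1 / ((b : ℝ) - a + 1)) >
        (b : ℝ) * Real.exp (-(27 / 26)) ∧
      ((b.factorial : ℝ) / ((a - 1).factorial : ℝ)) ^ (1 / ((b : ℝ) - a + 1)) > (b : ℝ) / 3 := by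
  have hlen : (b : ℝ) - a + 1 = ((b - (a - 1) : ℕ) : ℝ) := by
    rw [Nat.cast_sub (by omega), Nat.cast_sub (by omega)]; push_cast; ring
  have hroot := mul_exp_neg_one_le_rpow_factorial_div_factorial (m := a - 1) (b := b) (by omega)
  have hb : (0 : ℝ) < b := Nat.cast_pos.2 (by omega)
  have h27 : (b : ℝ) * exp (-(27 / 26)) < b * exp (-1) :=
    mul_lt_mul_of_pos_left (exp_lt_exp.2 (by norm_num)) hb
  have h3 : (b : ℝ) / 3 < b * exp (-(27 / 26)) := by
    rw [exp_neg, ← div_eq_mul_inv]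
    exact div_lt_div_of_pos_left hb (exp_pos _) exp_27_div_26_lt_three
  rw [hlen]
  exact ⟨h27.trans_le hroot, h3.trans (h27.trans_le hroot)⟩
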